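/- arXiv:0711.4834 — 2 statements merged into one kernel-verified Lean document; each statement's English description precedes it below -/
import Mathlib

section
/- Let G be a cyclic group of order n with generator g, and P_* the standard periodic resolution with P_i free on e_i. Define Δ: P_* → P_* ⊗ P_* by its component into P_a ⊗ P_b on e_{a+b}: equal to e_a ⊗ e_b if a is even; e_a ⊗ g·e_b if a is odd and b is even; and Σ_{0 ≤ i < j < n} g^i e_a ⊗ g^j e_b if a and b are both odd. Then Δ is a chain map of complexes of F_p[G]-modules (where G acts diagonally on P_* ⊗ P_*), i.e. Δ commutes with the differentials. -/
open Finset TensorProduct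

noncomputable section

variable (p n : ℕ) (G : Type) [CommGroup G] (g : G)

/-- The group algebra `F_p[G]`; each term `P_i` of the standard periodic resolution of a
cyclic group is free of rank one over it, on the generator `e_i`. -/
abbrev GA : Type := MonoidAlgebra (ZMod p) G

/-- `g` as an element of the group algebra. -/
def ofg : GA p G := MonoidAlgebra.of (ZMod p) G g

/-- The norm element `N = 1 + g + ⋯ + g^(n-1)`. -/
def normElt : GA p G := ∑ k ∈ Finset.range n, (ofg p G g) ^ k

/-- The coefficient of the differential `d(e_i) = coef i • e_(i-1)` of the periodic
resolution: `g - 1` for `i` odd, `N` for `i` even. -/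
def coefD (i : ℕ) : GA p G := if Odd i then ofg p G g - 1 else normElt p n G g

/-- The augmentation `F_p[G] → F_p`. -/
def augGA : GA p G →ₐ[ZMod p] ZMod p := (MonoidAlgebra.lift (ZMod p) (ZMod p) G) 1

/-- The coefficient of the Cartan–Eilenberg diagonal approximation:
`Δ(e_(a+b)) = Δel a b • (e_a ⊗ e_b)` (diagonal `G`-action on the right). -/
def Δel (a b : ℕ) : GA p G ⊗[ZMod p] GA p G :=
  if Even a then 1 ⊗ₜ 1
  else if Even b then 1 ⊗ₜ ofg p G g
  else ∑ j ∈ Finset.range n, ∑ i ∈ Finset.range j, ((ofg p G g) ^ i) ⊗ₜ ((ofg p G g) ^ j)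

/-- The comultiplication `F_p[G] → F_p[G] ⊗ F_p[G]`, `h ↦ h ⊗ h`, encoding the diagonal
action of the group algebra on a tensor product. -/
def comul2 : GA p G →ₐ[ZMod p] GA p G ⊗[ZMod p] GA p G :=
  (MonoidAlgebra.lift (ZMod p) (GA p G ⊗[ZMod p] GA p G) G)
    { toFun := fun h => (MonoidAlgebra.of (ZMod p) G h) ⊗ₜ (MonoidAlgebra.of (ZMod p) G h)
      map_one' := by
        show _ ⊗ₜ _ = _
        rw [map_one]
        rfl
      map_mul' := by
        intro x y
        show _ ⊗ₜ _ = _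
        simp only [map_mul, Algebra.TensorProduct.tmul_mul_tmul] }

/-- The component `P_(a+b) → P_a ⊗ P_b` of the diagonal approximation, as the
`G`-equivariant map sending `e_(a+b)` to `Δel a b • (e_a ⊗ e_b)`. -/
def Δmap (a b : ℕ) : GA p G →ₗ[ZMod p] GA p G ⊗[ZMod p] GA p G :=
  (LinearMap.mulRight (ZMod p) (Δel p n G g a b)).comp (comul2 p G).toLinearMap

/-- Triple tensors. -/
abbrev GA3 : Type := GA p G ⊗[ZMod p] (GA p G ⊗[ZMod p] GA p G)

def comul3 : GA p G →ₐ[ZMod p] GA3 p G :=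
  (MonoidAlgebra.lift (ZMod p) (GA3 p G) G)
    { toFun := fun h => (MonoidAlgebra.of (ZMod p) G h) ⊗ₜ
        ((MonoidAlgebra.of (ZMod p) G h) ⊗ₜ (MonoidAlgebra.of (ZMod p) G h))
      map_one' := by
        show _ ⊗ₜ _ = _
        rw [map_one]
        rfl
      map_mul' := by
        intro x y
        show _ ⊗ₜ _ = _
        simp only [map_mul, Algebra.TensorProduct.tmul_mul_tmul] }

/-- The coefficient of Steenrod-style homotopy `H`:
`H(e_(a+b+c-1))`'s component in `P_a ⊗ P_b ⊗ P_c` is `Hel a b c • (e_a ⊗ e_b ⊗ e_c)`. -/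
def Hel (a b c : ℕ) : GA3 p G :=
  if Odd a ∧ Odd b ∧ Odd c then
    ∑ k ∈ Finset.range n, ∑ j ∈ Finset.range k, ∑ i ∈ Finset.range j,
      ((ofg p G g) ^ i) ⊗ₜ (((ofg p G g) ^ j) ⊗ₜ ((ofg p G g) ^ k))
  else 0

/-- Component of `(Δ ⊗ 1)Δ − (1 ⊗ Δ)Δ` at `P_a ⊗ P_b ⊗ P_c`, evaluated on `e_(a+b+c)`. -/
def coassocDefect (a b c : ℕ) : GA3 p G :=
  (TensorProduct.assoc (ZMod p) (GA p G) (GA p G) (GA p G))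
      (TensorProduct.map (Δmap p n G g a b) LinearMap.id (Δel p n G g (a + b) c))
    - TensorProduct.map LinearMap.id (Δmap p n G g b c) (Δel p n G g a (b + c))

end

/-!
Identify `P_a ⊗ P_b` with the commutative ring `F_p[G] ⊗ F_p[G]`, in which the two copies of
`g` are `u = g ⊗ 1` and `v = 1 ⊗ g` and the diagonal action of `g` is multiplication by `u * v`.
In each of the four parity cases for `(a, b)` the chain-map identity becomes a polynomial identity
in `u` and `v` modulo `v ^ n = 1`. The only nontrivial ingredients are the two identities for the
triangular sum `S = ∑_{i < j < n} u^i v^j`, namely `(u - 1) S = N(uv) - N(v)` and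
`(v - 1) S = v^n N(u) - N(uv) v` (with `N(w) = ∑_{k < n} w^k`), both proved by induction on `n`.
-/

section TriangleSum

variable {R : Type*} [CommRing R]

def triangleSum (n : ℕ) (u v : R) : R := ∑ j ∈ range n, ∑ i ∈ range j, u ^ i * v ^ j

theorem triangleSum_succ (n : ℕ) (u v : R) :
    triangleSum (n + 1) u v = triangleSum n u v + (∑ i ∈ range n, u ^ i) * v ^ n := by
  rw [triangleSum, sum_range_succ, sum_mul, triangleSum]

theorem sub_one_mul_triangleSum_left (n : ℕ) (u v : R) :
    (u - 1) * triangleSum n u v = ∑ j ∈ range n, (u * v) ^ j - ∑ j ∈ range n, v ^ j := by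
  induction n with
  | zero => simp [triangleSum]
  | succ n ih =>
    rw [triangleSum_succ, sum_range_succ, sum_range_succ]
    linear_combination ih + v ^ n * mul_geom_sum u n

theorem sub_one_mul_triangleSum_right (n : ℕ) (u v : R) :
    (v - 1) * triangleSum n u v
      = v ^ n * ∑ i ∈ range n, u ^ i - (∑ i ∈ range n, (u * v) ^ i) * v := by
  induction n with
  | zero => simp [triangleSum]
  | succ n ih =>
    rw [triangleSum_succ, sum_range_succ, sum_range_succ]
    linear_combination ih

theorem mul_sub_one_mul_triangleSum {n : ℕ} (u : R) {v : R} (hv : v ^ n = 1) :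
    (u * v - 1) * triangleSum n u v = ∑ i ∈ range n, u ^ i - ∑ i ∈ range n, v ^ i := by
  linear_combination v * sub_one_mul_triangleSum_left n u v + sub_one_mul_triangleSum_right n u v
    + (∑ i ∈ range n, u ^ i) * hv - mul_geom_sum v n - hv

end TriangleSum

section GroupAlgebra

open Algebra.TensorProduct

variable (p n : ℕ) (G : Type) [CommGroup G] (g : G)

theorem map_coefD {B : Type*} [Ring B] [Algebra (ZMod p) B] (φ : GA p G →ₐ[ZMod p] B) (i : ℕ) :
    φ (coefD p n G g i)
      = if Even i then ∑ k ∈ range n, φ (ofg p G g) ^ k else φ (ofg p G g) - 1 := by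
  simp only [coefD, normElt, ← Nat.not_even_iff_odd, ite_not]
  split_ifs <;> simp

theorem comul2_ofg :
    comul2 p G (ofg p G g) = includeLeft (S := ZMod p) (ofg p G g) * includeRight (ofg p G g) := by
  rw [includeLeft_apply, includeRight_apply, tmul_mul_tmul, mul_one, one_mul]
  exact MonoidAlgebra.lift_of _ _

theorem Δel_eq (a b : ℕ) :
    Δel p n G g a b =
      if Even a then 1
      else if Even b then includeRight (ofg p G g)
      else triangleSum n (includeLeft (S := ZMod p) (ofg p G g)) (includeRight (ofg p G g)) := by
  simp only [Δel, triangleSum, includeLeft_apply, includeRight_apply, tmul_pow, tmul_mul_tmul,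
    one_pow, mul_one, one_mul, one_def]

theorem ofg_pow_orderOf : ofg p G g ^ orderOf g = 1 := by
  rw [ofg, ← map_pow, pow_orderOf_eq_one, map_one]

end GroupAlgebra

theorem stmt3_general (p n : ℕ) (G : Type) [CommGroup G] (g : G)
    (hord : orderOf g = n) :
    ∀ a b : ℕ,
      TensorProduct.map (LinearMap.mulLeft (ZMod p) (coefD p n G g (a + 1))) LinearMap.id
          (Δel p n G g (a + 1) b)
        + ((-1 : ZMod p) ^ a) •
            TensorProduct.map LinearMap.id
              (LinearMap.mulLeft (ZMod p) (coefD p n G g (b + 1)))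
              (Δel p n G g a (b + 1))
        = comul2 p G (coefD p n G g (a + b + 1)) * Δel p n G g a b := by
  intro a b
  -- `rw [neg_one_smul]` does not match the scalar action on the tensor product as elaborated here
  have hsign : ∀ x : GA p G ⊗[ZMod p] GA p G, (-1 : ZMod p) ^ a • x = if Even a then x else -x := by
    intro x
    split_ifs with ha
    · rw [ha.neg_one_pow, one_smul]
    · rw [(Nat.not_even_iff_odd.mp ha).neg_one_pow]
      exact neg_one_smul _ x
  have hv : Algebra.TensorProduct.includeRight (R := ZMod p) (A := GA p G) (ofg p G g) ^ n = 1 := by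
    rw [← map_pow, ← hord, ofg_pow_orderOf, map_one]
  rw [hsign, ← LinearMap.mulLeft_one, ← LinearMap.mulLeft_tmul, ← LinearMap.mulLeft_tmul]
  simp only [LinearMap.mulLeft_apply, ← Algebra.TensorProduct.includeLeft_apply (S := ZMod p),
    ← Algebra.TensorProduct.includeRight_apply, map_coefD, Δel_eq, comul2_ofg]
  generalize Algebra.TensorProduct.includeLeft (R := ZMod p) (S := ZMod p) (B := GA p G)
    (ofg p G g) = u
  generalize Algebra.TensorProduct.includeRight (R := ZMod p) (A := GA p G) (ofg p G g) = v at hv ⊢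
  by_cases ha : Even a <;> by_cases hb : Even b <;>
    simp only [ha, hb, Nat.even_add_one, Nat.even_add, iff_true, iff_false, not_true_eq_false,
      not_false_eq_true, ↓reduceIte, mul_one]
  · ring
  · linear_combination sub_one_mul_triangleSum_left n u v
  · linear_combination -sub_one_mul_triangleSum_right n u v - (∑ i ∈ range n, u ^ i) * hv
  · linear_combination -mul_sub_one_mul_triangleSum u hv - mul_geom_sum v n - hv

/-- Let `G` be a cyclic group of order `n` with generator `g`, and
`P_*` the standard periodic resolution with `P_i` free on `e_i`.  The Cartan–Eilenberg
diagonal `Δ : P_* → P_* ⊗ P_*`, whose component into `P_a ⊗ P_b` sends `e_(a+b)` to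
`e_a ⊗ e_b` (`a` even), `e_a ⊗ g·e_b` (`a` odd, `b` even), and
`Σ_{0 ≤ i < j < n} gⁱe_a ⊗ gʲe_b` (`a`, `b` odd), is a chain map of complexes of
`F_p[G]`-modules for the diagonal `G`-action on `P_* ⊗ P_*`.  Identifying `P_i` with
`F_p[G]`, the component of `Δ(e_(a+b))` in `P_a ⊗ P_b` is the element `Δel a b`, the
differentials act by multiplication by `coefD i` (`g - 1` for `i` odd, the norm `N` for
`i` even) on the corresponding factor (with the Koszul sign), and the diagonal action of
the differential's coefficient is multiplication by its image under the comultiplication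
`h ↦ h ⊗ h`; commutation of `Δ` with the differentials is then the stated identity,
componentwise at `P_a ⊗ P_b` on `e_(a+b+1)`. -/
theorem stmt3 (p n : ℕ) (hp : p.Prime) (hn : 0 < n) (G : Type) [CommGroup G] (g : G)
    (hord : orderOf g = n) (hgen : ∀ x : G, x ∈ Subgroup.zpowers g) :
    ∀ a b : ℕ,
      TensorProduct.map (LinearMap.mulLeft (ZMod p) (coefD p n G g (a + 1))) LinearMap.id
          (Δel p n G g (a + 1) b)
        + ((-1 : ZMod p) ^ a) •
            TensorProduct.map LinearMap.id
              (LinearMap.mulLeft (ZMod p) (coefD p n G g (b + 1)))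
              (Δel p n G g a (b + 1))
        = comul2 p G (coefD p n G g (a + b + 1)) * Δel p n G g a b :=
  stmt3_general p n G g hord
end

section
/- Let n = a + b + c with a, b, c ≥ 1 and consider, over the group algebra of a cyclic group of order n' generated by g, the expression (Δ⊗1)Δ(e_n) − (1⊗Δ)Δ(e_n) projected to P_a ⊗ P_b ⊗ P_c, where Δ is the Cartan–Eilenberg diagonal. This projection equals: Σ_{0≤i<j<n'}(g^i e_a ⊗ g^j e_b ⊗ e_c − e_a ⊗ g^{i+1} e_b ⊗ g^{j+1} e_c) if a, b, c are all odd; Σ_{0≤i<j<n'} g^i e_a ⊗ g^j e_b ⊗ (1−g^{j+1}) e_c if exactly a and b are odd; Σ_{0≤i<j<n'} g^i e_a ⊗ (g^{i+1}−g^j) e_b ⊗ g^j e_c if exactly a and c are odd; Σ_{0≤i<j<n'} (g^i−1) e_a ⊗ g^i e_b ⊗ g^j e_c if exactly b and c are odd; and 0 otherwise. -/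
open Finset TensorProduct

noncomputable section

variable (p n : ℕ) (G : Type) [CommGroup G] (g : G)

/-- The explicit value of the coassociativity defect `(Δ⊗1)Δ − (1⊗Δ)Δ` at
`P_a ⊗ P_b ⊗ P_c` on `e_(a+b+c)`, according to the parities of `a`, `b`, `c`. -/
def rhsFive (a b c : ℕ) : GA3 p G :=
  if Odd a ∧ Odd b ∧ Odd c then
    ∑ j ∈ Finset.range n, ∑ i ∈ Finset.range j,
      (((ofg p G g) ^ i) ⊗ₜ (((ofg p G g) ^ j) ⊗ₜ (1 : GA p G))
        - (1 : GA p G) ⊗ₜ (((ofg p G g) ^ (i + 1)) ⊗ₜ ((ofg p G g) ^ (j + 1))))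
  else if Odd a ∧ Odd b then
    ∑ j ∈ Finset.range n, ∑ i ∈ Finset.range j,
      ((ofg p G g) ^ i) ⊗ₜ (((ofg p G g) ^ j) ⊗ₜ ((1 : GA p G) - (ofg p G g) ^ (j + 1)))
  else if Odd a ∧ Odd c then
    ∑ j ∈ Finset.range n, ∑ i ∈ Finset.range j,
      ((ofg p G g) ^ i) ⊗ₜ ((((ofg p G g) ^ (i + 1)) - (ofg p G g) ^ j) ⊗ₜ ((ofg p G g) ^ j))
  else if Odd b ∧ Odd c then
    ∑ j ∈ Finset.range n, ∑ i ∈ Finset.range j,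
      (((ofg p G g) ^ i) - (1 : GA p G)) ⊗ₜ (((ofg p G g) ^ i) ⊗ₜ ((ofg p G g) ^ j))
  else 0

end

/-!
The Cartan–Eilenberg diagonal is `G`-equivariant for the diagonal action, so on `h • e_m` it
is `(h ⊗ h) * Δel`; both composites `(Δ ⊗ 1)Δ` and `(1 ⊗ Δ)Δ` applied to `e_(a+b+c)` are
therefore explicit coefficients of `e_a ⊗ e_b ⊗ e_c`. Which case of `Δel` enters at each of the
two steps depends only on the parities of `a`, `b`, `c`, and each parity pattern is a direct
expansion.
-/

section

variable {p n : ℕ} {G : Type} [CommGroup G] {g : G} {a b c : ℕ}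

theorem comul2_ofg_pow (k : ℕ) :
    comul2 p G (ofg p G g ^ k) = (ofg p G g ^ k) ⊗ₜ (ofg p G g ^ k) := by
  rw [map_pow, ← Algebra.TensorProduct.tmul_pow]
  simp [comul2, ofg]

theorem Δmap_ofg_pow (k : ℕ) :
    Δmap p n G g a b (ofg p G g ^ k)
      = ((ofg p G g ^ k) ⊗ₜ (ofg p G g ^ k)) * Δel p n G g a b := by
  simp [Δmap, comul2_ofg_pow]

theorem Δmap_one : Δmap p n G g a b 1 = Δel p n G g a b := by
  simp [Δmap]

theorem Δmap_ofg :
    Δmap p n G g a b (ofg p G g) = (ofg p G g ⊗ₜ ofg p G g) * Δel p n G g a b := by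
  simpa using Δmap_ofg_pow (p := p) (n := n) (g := g) (a := a) (b := b) 1

theorem Δel_of_even (ha : Even a) : Δel p n G g a b = 1 ⊗ₜ 1 := by
  simp [Δel, ha]

theorem Δel_of_odd_of_even (ha : Odd a) (hb : Even b) :
    Δel p n G g a b = 1 ⊗ₜ ofg p G g := by
  simp [Δel, Nat.not_even_iff_odd.2 ha, hb]

theorem Δel_of_odd_of_odd (ha : Odd a) (hb : Odd b) :
    Δel p n G g a b =
      ∑ j ∈ range n, ∑ i ∈ range j, (ofg p G g ^ i) ⊗ₜ (ofg p G g ^ j) := by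
  simp [Δel, Nat.not_even_iff_odd.2 ha, Nat.not_even_iff_odd.2 hb]

theorem coassocDefect_of_even_of_even (ha : Even a) (hb : Even b) :
    coassocDefect p n G g a b c = 0 := by
  rw [coassocDefect, Δel_of_even (ha.add hb), Δel_of_even ha]
  simp [Δmap_one, Δel_of_even ha, Δel_of_even hb]

theorem coassocDefect_of_even_of_odd_of_even (ha : Even a) (hb : Odd b) (hc : Even c) :
    coassocDefect p n G g a b c = 0 := by
  rw [coassocDefect, Δel_of_odd_of_even (ha.add_odd hb) hc, Δel_of_even ha]
  simp [Δmap_one, Δel_of_even ha, Δel_of_odd_of_even hb hc]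

theorem coassocDefect_of_odd_of_even_of_even (ha : Odd a) (hb : Even b) (hc : Even c) :
    coassocDefect p n G g a b c = 0 := by
  rw [coassocDefect, Δel_of_odd_of_even (ha.add_even hb) hc,
    Δel_of_odd_of_even ha (hb.add hc)]
  simp [Δmap_one, Δmap_ofg, Δel_of_odd_of_even ha hb, Δel_of_even hb]

theorem coassocDefect_of_even_of_odd_of_odd (ha : Even a) (hb : Odd b) (hc : Odd c) :
    coassocDefect p n G g a b c = ∑ j ∈ range n, ∑ i ∈ range j,
      (ofg p G g ^ i - 1) ⊗ₜ ((ofg p G g ^ i) ⊗ₜ (ofg p G g ^ j)) := by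
  rw [coassocDefect, Δel_of_odd_of_odd (ha.add_odd hb) hc, Δel_of_even ha]
  simp [Δmap_one, Δmap_ofg_pow, Δel_of_even ha, Δel_of_odd_of_odd hb hc, tmul_sum, sub_tmul,
    sum_sub_distrib]

theorem coassocDefect_of_odd_of_even_of_odd (ha : Odd a) (hb : Even b) (hc : Odd c) :
    coassocDefect p n G g a b c = ∑ j ∈ range n, ∑ i ∈ range j,
      (ofg p G g ^ i) ⊗ₜ ((ofg p G g ^ (i + 1) - ofg p G g ^ j) ⊗ₜ (ofg p G g ^ j)) := by
  rw [coassocDefect, Δel_of_odd_of_odd (ha.add_even hb) hc,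
    Δel_of_odd_of_odd ha (hb.add_odd hc)]
  simp [Δmap_ofg_pow, Δel_of_odd_of_even ha hb, Δel_of_even hb, sub_tmul, tmul_sub,
    sum_sub_distrib, pow_succ]

theorem coassocDefect_of_odd_of_odd_of_even (ha : Odd a) (hb : Odd b) (hc : Even c) :
    coassocDefect p n G g a b c = ∑ j ∈ range n, ∑ i ∈ range j,
      (ofg p G g ^ i) ⊗ₜ ((ofg p G g ^ j) ⊗ₜ (1 - ofg p G g ^ (j + 1))) := by
  rw [coassocDefect, Δel_of_even (ha.add_odd hb), Δel_of_odd_of_odd ha (hb.add_even hc)]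
  simp [Δmap_one, Δmap_ofg_pow, Δel_of_odd_of_odd ha hb, Δel_of_odd_of_even hb hc, sum_tmul,
    tmul_sub, sum_sub_distrib, pow_succ]

theorem coassocDefect_of_odd_of_odd_of_odd (ha : Odd a) (hb : Odd b) (hc : Odd c) :
    coassocDefect p n G g a b c = ∑ j ∈ range n, ∑ i ∈ range j,
      ((ofg p G g ^ i) ⊗ₜ ((ofg p G g ^ j) ⊗ₜ 1)
        - 1 ⊗ₜ ((ofg p G g ^ (i + 1)) ⊗ₜ (ofg p G g ^ (j + 1)))) := by
  rw [coassocDefect, Δel_of_even (ha.add_odd hb), Δel_of_odd_of_even ha (hb.add_odd hc)]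
  simp [Δmap_one, Δmap_ofg, Δel_of_odd_of_odd ha hb, Δel_of_odd_of_odd hb hc, mul_sum,
    sum_tmul, tmul_sum, sum_sub_distrib, pow_succ']

end

theorem stmt5_general (p n' : ℕ) (G : Type) [CommGroup G] (g : G) :
    ∀ a b c : ℕ, 1 ≤ a → 1 ≤ b → 1 ≤ c →
      coassocDefect p n' G g a b c = rhsFive p n' G g a b c := by
  intro a b c _ _ _
  by_cases ha : Odd a <;> by_cases hb : Odd b <;> by_cases hc : Odd c <;>
    simp only [rhsFive, ha, hb, hc, and_self, and_true, and_false, if_true, if_false] <;>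
    try simp only [Nat.not_odd_iff_even] at ha hb hc
  · exact coassocDefect_of_odd_of_odd_of_odd ha hb hc
  · exact coassocDefect_of_odd_of_odd_of_even ha hb hc
  · exact coassocDefect_of_odd_of_even_of_odd ha hb hc
  · exact coassocDefect_of_odd_of_even_of_even ha hb hc
  · exact coassocDefect_of_even_of_odd_of_odd ha hb hc
  · exact coassocDefect_of_even_of_odd_of_even ha hb hc
  · exact coassocDefect_of_even_of_even ha hb
  · exact coassocDefect_of_even_of_even ha hb

/-- Let `n = a + b + c` with `a, b, c ≥ 1` and consider, over the group
algebra of a cyclic group of order `n'` generated by `g`, the component at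
`P_a ⊗ P_b ⊗ P_c` of `(Δ⊗1)Δ(e_n) − (1⊗Δ)Δ(e_n)`, where `Δ` is the Cartan–Eilenberg
diagonal.  This component equals the explicit expression `rhsFive`, determined by the
parities of `a`, `b` and `c` (here `n'` plays the role of the group order and the
projection to `P_a ⊗ P_b ⊗ P_c` is expressed by coefficients in `F_p[G]⊗F_p[G]⊗F_p[G]`
relative to `e_a ⊗ e_b ⊗ e_c`). -/
theorem stmt5 (p n' : ℕ) (hp : p.Prime) (hn : 0 < n') (G : Type) [CommGroup G] (g : G)
    (hord : orderOf g = n') (hgen : ∀ x : G, x ∈ Subgroup.zpowers g) :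
    ∀ a b c : ℕ, 1 ≤ a → 1 ≤ b → 1 ≤ c →
      coassocDefect p n' G g a b c = rhsFive p n' G g a b c :=
  stmt5_general p n' G g
end
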